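/- arXiv:1709.08434 — 5 statements merged into one kernel-verified Lean document; each statement's English description precedes it below -/
import Mathlib

section
/- Correctness of proof-of-possession verification (Eq. (2)) in the DPDP scheme with public verifiability and data privacy of Gritti et al.: let I be a finite set of challenged indices, let each challenged block m_i = (m_{i,1}, …, m_{i,s}) have a tag T_{m_i} ∈ G₁ satisfying the tag relation T_{m_i}^a = ∏_{j=1}^s h_j^{m_{i,j}}, let v_i ∈ ℤ (for i ∈ I) be the challenge coefficients and r_j ∈ ℤ (for j = 1, …, s) be the server's randomness, and set R_j = h_j^{r_j}, b_j = (∑_{i∈I} m_{i,j}·v_i) + r_j, B_j = h_j^{b_j}, and c = ∏_{i∈I} T_{m_i}^{v_i}. Then e(c, g₂^a) · e(∏_{j=1}^s R_j, g₂) = e(∏_{j=1}^s B_j, g₂). -/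
/-!
Both sides are values of the homomorphism `e (-) g₂`. Bilinearity moves the exponent `a` from
`g₂` onto `c`, and the tag relation turns `c ^ a = ∏ᵢ (T i ^ a) ^ (v i)` into
`∏ⱼ h j ^ (∑ᵢ m i j * v i)`; multiplying by `∏ⱼ R j = ∏ⱼ h j ^ r j` gives `∏ⱼ B j`.
-/

open Finset

theorem Finset.prod_zpow_eq_zpow_sum {ι G : Type*} [CommGroup G] (s : Finset ι) (f : ι → ℤ)
    (x : G) : ∏ i ∈ s, x ^ f i = x ^ ∑ i ∈ s, f i := by
  induction s using Finset.cons_induction with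
  | empty => simp
  | cons a s ha ih => rw [prod_cons, sum_cons, zpow_add, ih]

theorem zpow_right_eq_zpow_left_of_bilinear {G₁ G₂ GT : Type*} [CommGroup G₁] [CommGroup G₂]
    [CommGroup GT] (e : G₁ → G₂ → GT)
    (he₁ : ∀ x y z, e (x * y) z = e x z * e y z) (he₂ : ∀ x z w, e x (z * w) = e x z * e x w)
    (x : G₁) (z : G₂) (n : ℤ) : e x (z ^ n) = e (x ^ n) z :=
  calc e x (z ^ n) = e x z ^ n := map_zpow (MonoidHom.mk' (e x) (he₂ x)) z n
    _ = e (x ^ n) z := (map_zpow (MonoidHom.mk' (e · z) (he₁ · · z)) x n).symm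

theorem zpow_prod_zpow_of_zpow_eq_prod {ι κ G : Type*} [CommGroup G] [Fintype κ]
    (a : ℤ) (h : κ → G) (I : Finset ι) (m : ι → κ → ℤ) (T : ι → G)
    (hT : ∀ i ∈ I, T i ^ a = ∏ j, h j ^ m i j) (v : ι → ℤ) :
    (∏ i ∈ I, T i ^ v i) ^ a = ∏ j, h j ^ ∑ i ∈ I, m i j * v i :=
  calc (∏ i ∈ I, T i ^ v i) ^ a = ∏ i ∈ I, (T i ^ a) ^ v i := by
        rw [← prod_zpow]
        exact prod_congr rfl fun i _ => by rw [← zpow_mul, ← zpow_mul, mul_comm]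
    _ = ∏ i ∈ I, ∏ j, h j ^ (m i j * v i) :=
        prod_congr rfl fun i hi => by
          rw [hT i hi, ← prod_zpow]
          exact prod_congr rfl fun j _ => (zpow_mul _ _ _).symm
    _ = ∏ j, h j ^ ∑ i ∈ I, m i j * v i := by
        rw [prod_comm]
        exact prod_congr rfl fun j _ => prod_zpow_eq_zpow_sum _ _ _

/-- Correctness of proof-of-possession verification (Eq. (2)) in the DPDP
scheme of Gritti et al. -/
theorem dpdp_checkProof_correct
    {G₁ G₂ GT : Type*} [CommGroup G₁] [CommGroup G₂] [CommGroup GT]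
    (e : G₁ → G₂ → GT)
    (he₁ : ∀ x y z, e (x * y) z = e x z * e y z)
    (he₂ : ∀ x z w, e x (z * w) = e x z * e x w)
    (g₂ : G₂) (a : ℤ) (s : ℕ) (h : Fin s → G₁)
    {ι : Type*} (I : Finset ι)
    (m : ι → Fin s → ℤ) (T : ι → G₁)
    (hT : ∀ i ∈ I, (T i) ^ a = ∏ j, (h j) ^ (m i j))
    (v : ι → ℤ) (r : Fin s → ℤ)
    (R : Fin s → G₁) (hR : ∀ j, R j = (h j) ^ (r j))
    (B : Fin s → G₁)
    (hB : ∀ j, B j = (h j) ^ ((∑ i ∈ I, m i j * v i) + r j))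
    (c : G₁) (hc : c = ∏ i ∈ I, (T i) ^ (v i)) :
    e c (g₂ ^ a) * e (∏ j, R j) g₂ = e (∏ j, B j) g₂ := by
  have hca : c ^ a * ∏ j, R j = ∏ j, B j := by
    rw [hc, zpow_prod_zpow_of_zpow_eq_prod a h I m T hT v, ← prod_mul_distrib]
    exact prod_congr rfl fun j _ => by rw [hR, hB, zpow_add]
  rw [zpow_right_eq_zpow_left_of_bilinear e he₁ he₂, ← he₁, hca]
end

section
/- Correctness of the updating-proof verification (Eq. (1)) in the DPDP scheme of Gritti et al.: let the block m_l = (m_{l,1}, …, m_{l,s}) have a tag T_{m_l} ∈ G₁ satisfying T_{m_l}^a = ∏_{j=1}^s h_j^{m_{l,j}}, let w_l ∈ ℤ and u_j ∈ ℤ (for j = 1, …, s) be the server's randomness, and set U_j = h_j^{u_j}, c_j = m_{l,j}·w_l + u_j, C_j = h_j^{c_j}, and d = T_{m_l}^{w_l}. Then e(d, g₂^a) · e(∏_{j=1}^s U_j, g₂) = e(∏_{j=1}^s C_j, g₂). -/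
/-! Fixing one argument of a bilinear map gives a group homomorphism in the other, so both arguments
commute with integer powers: `e (T ^ w) (g₂ ^ a) = e ((T ^ a) ^ w) g₂`. The tag relation turns
`(T ^ a) ^ w` into `∏ j, h j ^ (m j * w)`, and multiplying in `∏ j, h j ^ u j` inside the first
argument gives `∏ j, C j`. -/

theorem zpow_left_of_map_mul_left {G₁ G₂ GT : Type*} [Group G₁] [Group GT] {e : G₁ → G₂ → GT}
    (he : ∀ x y z, e (x * y) z = e x z * e y z) (x : G₁) (z : G₂) (n : ℤ) :
    e (x ^ n) z = e x z ^ n :=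
  map_zpow (MonoidHom.mk' (e · z) (he · · z)) x n

theorem zpow_right_of_map_mul_right {G₁ G₂ GT : Type*} [Group G₂] [Group GT] {e : G₁ → G₂ → GT}
    (he : ∀ x z w, e x (z * w) = e x z * e x w) (x : G₁) (z : G₂) (n : ℤ) :
    e x (z ^ n) = e x z ^ n :=
  map_zpow (MonoidHom.mk' (e x) (he x)) z n

theorem Finset.prod_zpow_zpow_mul_prod_zpow {ι G : Type*} [CommGroup G] (s : Finset ι)
    (h : ι → G) (m u : ι → ℤ) (w : ℤ) :
    (∏ j ∈ s, h j ^ m j) ^ w * ∏ j ∈ s, h j ^ u j = ∏ j ∈ s, h j ^ (m j * w + u j) := by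
  rw [← Finset.prod_zpow, ← Finset.prod_mul_distrib]
  exact Finset.prod_congr rfl fun j _ => by rw [← zpow_mul, ← zpow_add]

/-- Correctness of the updating-proof verification (Eq. (1)) in the DPDP
scheme of Gritti et al. -/
theorem dpdp_checkOp_correct
    {G₁ G₂ GT : Type*} [CommGroup G₁] [CommGroup G₂] [CommGroup GT]
    (e : G₁ → G₂ → GT)
    (he₁ : ∀ x y z, e (x * y) z = e x z * e y z)
    (he₂ : ∀ x z w, e x (z * w) = e x z * e x w)
    (g₂ : G₂) (a : ℤ) (s : ℕ) (h : Fin s → G₁)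
    (m : Fin s → ℤ) (T : G₁)
    (hT : T ^ a = ∏ j, (h j) ^ (m j))
    (w : ℤ) (u : Fin s → ℤ)
    (U : Fin s → G₁) (hU : ∀ j, U j = (h j) ^ (u j))
    (C : Fin s → G₁) (hC : ∀ j, C j = (h j) ^ (m j * w + u j))
    (d : G₁) (hd : d = T ^ w) :
    e d (g₂ ^ a) * e (∏ j, U j) g₂ = e (∏ j, C j) g₂ := by
  have hpair : e d (g₂ ^ a) = e ((T ^ a) ^ w) g₂ := by
    rw [hd, zpow_right_of_map_mul_right he₂, ← zpow_left_of_map_mul_left he₁,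
      ← zpow_mul, mul_comm, zpow_mul]
  rw [hpair, ← he₁, hT, funext hU, funext hC, Finset.prod_zpow_zpow_mul_prod_zpow]
end

section
/- Replay attack against the DPDP scheme of Gritti et al. (Eq. (4)): let m_i = (m_{i,1}, …, m_{i,s}) be the old block with tag T_{m_i} ∈ G₁ satisfying T_{m_i}^a = ∏_{j=1}^s h_j^{m_{i,j}}, and let m_i' be any new block (with its tag T_{m_i'}) that the client requested to replace m_i. If the server ignores the update and answers with d = T_{m_i}^{w_i}, U_j = h_j^{u_j} and C_j = h_j^{m_{i,j}·w_i + u_j} for arbitrary integers w_i, u_1, …, u_s, then the update-verification equation e(d, g₂^a) · e(∏_{j=1}^s U_j, g₂) = e(∏_{j=1}^s C_j, g₂) holds; hence the updating proof computed entirely from the old block m_i passes verification, for every choice of the new block m_i'. -/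
/-!
Every quantity in the server's answer is a power of the old tag `T` or of the generators `h j`,
so bilinearity moves all exponents into `GT`: `e (T ^ w) (g₂ ^ a) = e (T ^ a) g₂ ^ w`, and the tag
relation rewrites `e (T ^ a) g₂` as `∏ j, e (h j) g₂ ^ m j`. Both sides of the verification
equation then become `∏ j, e (h j) g₂ ^ (m j * w + u j)`. The new block never enters the check.
-/

namespace BilinearPairing

section Left

variable {G₁ G₂ GT : Type*} (e : G₁ → G₂ → GT)

theorem map_zpow_left [Group G₁] [Group GT] (he₁ : ∀ x y z, e (x * y) z = e x z * e y z)
    (x : G₁) (z : G₂) (n : ℤ) : e (x ^ n) z = e x z ^ n :=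
  (MonoidHom.mk' (e · z) fun x y => he₁ x y z).map_zpow x n

theorem map_prod_left [CommGroup G₁] [CommGroup GT]
    (he₁ : ∀ x y z, e (x * y) z = e x z * e y z)
    {ι : Type*} (s : Finset ι) (f : ι → G₁) (z : G₂) :
    e (∏ i ∈ s, f i) z = ∏ i ∈ s, e (f i) z :=
  map_prod (MonoidHom.mk' (e · z) fun x y => he₁ x y z) f s

end Left

theorem map_zpow_right {G₁ G₂ GT : Type*} [Group G₂] [Group GT] (e : G₁ → G₂ → GT)
    (he₂ : ∀ x z w, e x (z * w) = e x z * e x w) (x : G₁) (z : G₂) (n : ℤ) :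
    e x (z ^ n) = e x z ^ n :=
  (MonoidHom.mk' (e x) (he₂ x)).map_zpow z n

theorem map_zpow_zpow_comm {G₁ G₂ GT : Type*} [Group G₁] [Group G₂] [Group GT]
    (e : G₁ → G₂ → GT) (he₁ : ∀ x y z, e (x * y) z = e x z * e y z)
    (he₂ : ∀ x z w, e x (z * w) = e x z * e x w) (x : G₁) (z : G₂) (w a : ℤ) :
    e (x ^ w) (z ^ a) = e (x ^ a) z ^ w := by
  rw [map_zpow_right e he₂, map_zpow_left e he₁, map_zpow_left e he₁, ← zpow_mul, ← zpow_mul,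
    mul_comm]

end BilinearPairing

open BilinearPairing in
theorem dpdp_replay_proof_verifies {G₁ G₂ GT : Type*} [CommGroup G₁] [CommGroup G₂]
    [CommGroup GT] (e : G₁ → G₂ → GT) (he₁ : ∀ x y z, e (x * y) z = e x z * e y z)
    (he₂ : ∀ x z w, e x (z * w) = e x z * e x w) (g₂ : G₂) (a : ℤ) {ι : Type*} [Fintype ι]
    (h : ι → G₁) (m : ι → ℤ) (T : G₁) (hT : T ^ a = ∏ j, h j ^ m j) (w : ℤ) (u : ι → ℤ) :
    e (T ^ w) (g₂ ^ a) * e (∏ j, h j ^ u j) g₂ = e (∏ j, h j ^ (m j * w + u j)) g₂ := by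
  have hpow := map_zpow_left e he₁
  calc e (T ^ w) (g₂ ^ a) * e (∏ j, h j ^ u j) g₂
      = (∏ j, e (h j) g₂ ^ m j) ^ w * ∏ j, e (h j) g₂ ^ u j := by
        simp only [map_zpow_zpow_comm e he₁ he₂, hT, map_prod_left e he₁, hpow]
    _ = ∏ j, e (h j) g₂ ^ (m j * w + u j) := by
        simp only [← Finset.prod_zpow, ← Finset.prod_mul_distrib, zpow_mul, zpow_add]
    _ = e (∏ j, h j ^ (m j * w + u j)) g₂ := by
        simp only [map_prod_left e he₁, hpow]

theorem dpdp_replay_attack_general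
    {G₁ G₂ GT : Type*} [CommGroup G₁] [CommGroup G₂] [CommGroup GT]
    (e : G₁ → G₂ → GT)
    (he₁ : ∀ x y z, e (x * y) z = e x z * e y z)
    (he₂ : ∀ x z w, e x (z * w) = e x z * e x w)
    (g₂ : G₂) (a : ℤ) (s : ℕ) (h : Fin s → G₁)
    (m : Fin s → ℤ) (T : G₁)
    (hT : T ^ a = ∏ j, (h j) ^ (m j))
    (w : ℤ) (u : Fin s → ℤ)
    (d : G₁) (hd : d = T ^ w)
    (U : Fin s → G₁) (hU : ∀ j, U j = (h j) ^ (u j))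
    (C : Fin s → G₁) (hC : ∀ j, C j = (h j) ^ (m j * w + u j)) :
    e d (g₂ ^ a) * e (∏ j, U j) g₂ = e (∏ j, C j) g₂ := by
  rw [hd, funext hU, funext hC]
  exact dpdp_replay_proof_verifies e he₁ he₂ g₂ a h m T hT w u

/-- Replay attack against the DPDP scheme of Gritti et al. (Eq. (4)):
the updating proof computed entirely from the old block `m` passes
verification, for every choice of the new block `m'` (with its tag `T'`). -/
theorem dpdp_replay_attack
    {G₁ G₂ GT : Type*} [CommGroup G₁] [CommGroup G₂] [CommGroup GT]
    (e : G₁ → G₂ → GT)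
    (he₁ : ∀ x y z, e (x * y) z = e x z * e y z)
    (he₂ : ∀ x z w, e x (z * w) = e x z * e x w)
    (g₂ : G₂) (a : ℤ) (s : ℕ) (h : Fin s → G₁)
    (m : Fin s → ℤ) (T : G₁)
    (hT : T ^ a = ∏ j, (h j) ^ (m j))
    (m' : Fin s → ℤ) (T' : G₁)
    (hT' : T' ^ a = ∏ j, (h j) ^ (m' j))
    (w : ℤ) (u : Fin s → ℤ)
    (d : G₁) (hd : d = T ^ w)
    (U : Fin s → G₁) (hU : ∀ j, U j = (h j) ^ (u j))
    (C : Fin s → G₁) (hC : ∀ j, C j = (h j) ^ (m j * w + u j)) :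
    e d (g₂ ^ a) * e (∏ j, U j) g₂ = e (∏ j, C j) g₂ :=
  dpdp_replay_attack_general e he₁ he₂ g₂ a s h m T hT w u d hd U hU C hC
end

section
/- Correctness of the updating-proof verification (Eq. (5)) in the IHT-based DPDP scheme with public verifiability and data privacy: let H_l ∈ G₁ be the hash value H(l, vnb_l) of the rank l and version number vnb_l of the block m_l = (m_{l,1}, …, m_{l,s}), and let the tag T_{m_l} ∈ G₁ satisfy T_{m_l}^a = H_l · ∏_{j=1}^s h_j^{m_{l,j}}. For any integers w_l and u_1, …, u_s, set U_j = h_j^{u_j}, C_j = h_j^{m_{l,j}·w_l + u_j}, and d = T_{m_l}^{w_l}. Then e(d, g₂^a) · e(∏_{j=1}^s U_j, g₂) = e(H_l^{w_l}, g₂) · e(∏_{j=1}^s C_j, g₂). -/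
/-!
Both sides are values of the bilinear map at the second argument `g₂`, once bilinearity moves the
exponent `a` from `g₂ ^ a` onto `d = T ^ w`. It therefore suffices to compare the first arguments in
`G₁`, where the tag relation turns `(T ^ w) ^ a = (T ^ a) ^ w` into `(H · ∏ h_j ^ m_j) ^ w`, and the
masks `h_j ^ u_j` combine with `h_j ^ (m_j w)` into the `C_j`.
-/

section Bilinear

variable {G₁ G₂ GT : Type*} [CommGroup GT] {e : G₁ → G₂ → GT}

theorem map_zpow_left_of_map_mul_left [Group G₁] (he₁ : ∀ x y z, e (x * y) z = e x z * e y z)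
    (x : G₁) (z : G₂) (n : ℤ) : e (x ^ n) z = e x z ^ n :=
  (MonoidHom.mk' (e · z) fun x y => he₁ x y z).map_zpow x n

theorem map_zpow_right_of_map_mul_right [Group G₂] (he₂ : ∀ x z w, e x (z * w) = e x z * e x w)
    (x : G₁) (z : G₂) (n : ℤ) : e x (z ^ n) = e x z ^ n :=
  (MonoidHom.mk' (e x) (he₂ x)).map_zpow z n

end Bilinear

theorem zpow_zpow_mul_prod_eq_of_zpow_eq {G ι : Type*} [CommGroup G] {S : Finset ι}
    {h : ι → G} {H T : G} {a : ℤ} {m : ι → ℤ} (hT : T ^ a = H * ∏ j ∈ S, h j ^ m j)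
    (w : ℤ) (u : ι → ℤ) :
    (T ^ w) ^ a * ∏ j ∈ S, h j ^ u j = H ^ w * ∏ j ∈ S, h j ^ (m j * w + u j) := by
  simp only [zpow_add, zpow_mul, Finset.prod_mul_distrib, Finset.prod_zpow]
  rw [← zpow_mul, mul_comm w, zpow_mul, hT, mul_zpow, mul_assoc]

/-- Correctness of the updating-proof verification (Eq. (5)) in the IHT-based
DPDP scheme with public verifiability and data privacy. -/
theorem iht_dpdp_checkOp_correct
    {G₁ G₂ GT : Type*} [CommGroup G₁] [CommGroup G₂] [CommGroup GT]
    (e : G₁ → G₂ → GT)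
    (he₁ : ∀ x y z, e (x * y) z = e x z * e y z)
    (he₂ : ∀ x z w, e x (z * w) = e x z * e x w)
    (g₂ : G₂) (a : ℤ) (s : ℕ) (h : Fin s → G₁)
    (Hl : G₁) (m : Fin s → ℤ) (T : G₁)
    (hT : T ^ a = Hl * ∏ j, (h j) ^ (m j))
    (w : ℤ) (u : Fin s → ℤ)
    (U : Fin s → G₁) (hU : ∀ j, U j = (h j) ^ (u j))
    (C : Fin s → G₁) (hC : ∀ j, C j = (h j) ^ (m j * w + u j))
    (d : G₁) (hd : d = T ^ w) :
    e d (g₂ ^ a) * e (∏ j, U j) g₂ = e (Hl ^ w) g₂ * e (∏ j, C j) g₂ := by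
  have hd_swap : e d (g₂ ^ a) = e (d ^ a) g₂ := by
    rw [map_zpow_right_of_map_mul_right he₂, map_zpow_left_of_map_mul_left he₁]
  rw [hd_swap, ← he₁, ← he₁, hd, Finset.prod_congr rfl fun j _ => hU j,
    Finset.prod_congr rfl fun j _ => hC j, zpow_zpow_mul_prod_eq_of_zpow_eq hT]
end

section
/- Correctness of the proof-of-possession verification (Eq. (7)) in the MHT-based DPDP scheme with public verifiability and data privacy: let I be a finite set of challenged indices, for each i ∈ I let H'_i ∈ G₁ be the Merkle-hash value H'(m_i) of the block m_i = (m_{i,1}, …, m_{i,s}), and let the tag T_{m_i} ∈ G₁ satisfy T_{m_i}^a = H'_i · ∏_{j=1}^s h_j^{m_{i,j}}. For challenge coefficients v_i ∈ ℤ and randomness r_j ∈ ℤ, set R_j = h_j^{r_j}, B_j = h_j^{(∑_{i∈I} m_{i,j}·v_i) + r_j}, and c = ∏_{i∈I} T_{m_i}^{v_i}. Then e(c, g₂^a) · e(∏_{j=1}^s R_j, g₂) = e(∏_{i∈I} (H'_i)^{v_i}, g₂) · e(∏_{j=1}^s B_j, g₂). -/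
/-!
Raising the aggregated tag `c = ∏ T_i ^ v_i` to the secret `a` and using the tag relation gives
`c ^ a = ∏ H'_i ^ v_i * ∏_j h_j ^ μ_j` with `μ_j = ∑ m_{ij} v_i`, so that
`c ^ a * ∏ R_j = ∏ H'_i ^ v_i * ∏ B_j` holds already in `G₁`. Bilinearity moves the exponent `a`
from `g₂ ^ a` to `c` and merges each side of the verification equation into a single pairing
with `g₂`.
-/

open Finset

theorem map_zpow_of_map_mul {G H : Type*} [Group G] [Group H] (f : G → H)
    (hf : ∀ x y, f (x * y) = f x * f y) (x : G) (n : ℤ) : f (x ^ n) = f x ^ n :=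
  (MonoidHom.mk' f hf).map_zpow x n

theorem zpow_sum {G ι : Type*} [CommGroup G] (g : G) (s : Finset ι) (f : ι → ℤ) :
    g ^ (∑ i ∈ s, f i) = ∏ i ∈ s, g ^ f i := by
  classical
  induction s using Finset.cons_induction with
  | empty => simp
  | cons i s hi ih => rw [sum_cons, prod_cons, zpow_add, ih]

theorem prod_zpow_prod_zpow {G ι κ : Type*} [CommGroup G] (I : Finset ι) (J : Finset κ)
    (h : κ → G) (m : ι → κ → ℤ) (v : ι → ℤ) :
    ∏ i ∈ I, (∏ j ∈ J, h j ^ m i j) ^ v i = ∏ j ∈ J, h j ^ ∑ i ∈ I, m i j * v i := by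
  simp_rw [← prod_zpow, ← zpow_mul, zpow_sum]
  exact prod_comm

theorem prod_zpow_zpow_of_zpow_eq {G ι κ : Type*} [CommGroup G] (a : ℤ) (I : Finset ι)
    (J : Finset κ) (h : κ → G) (H' T : ι → G) (m : ι → κ → ℤ)
    (hT : ∀ i ∈ I, T i ^ a = H' i * ∏ j ∈ J, h j ^ m i j) (v : ι → ℤ) :
    (∏ i ∈ I, T i ^ v i) ^ a =
      (∏ i ∈ I, H' i ^ v i) * ∏ j ∈ J, h j ^ ∑ i ∈ I, m i j * v i := by
  calc (∏ i ∈ I, T i ^ v i) ^ a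
      = ∏ i ∈ I, (T i ^ a) ^ v i := by
        rw [← prod_zpow]
        exact prod_congr rfl fun i _ => by rw [← zpow_mul, ← zpow_mul, mul_comm]
    _ = ∏ i ∈ I, (H' i * ∏ j ∈ J, h j ^ m i j) ^ v i :=
        prod_congr rfl fun i hi => by rw [hT i hi]
    _ = _ := by rw [← prod_zpow_prod_zpow, ← prod_mul_distrib]; simp_rw [mul_zpow]

/-- Correctness of the proof-of-possession verification (Eq. (7)) in the
MHT-based DPDP scheme with public verifiability and data privacy. -/
theorem mht_dpdp_checkProof_correct
    {G₁ G₂ GT : Type*} [CommGroup G₁] [CommGroup G₂] [CommGroup GT]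
    (e : G₁ → G₂ → GT)
    (he₁ : ∀ x y z, e (x * y) z = e x z * e y z)
    (he₂ : ∀ x z w, e x (z * w) = e x z * e x w)
    (g₂ : G₂) (a : ℤ) (s : ℕ) (h : Fin s → G₁)
    {ι : Type*} (I : Finset ι)
    (H' : ι → G₁) (m : ι → Fin s → ℤ) (T : ι → G₁)
    (hT : ∀ i ∈ I, (T i) ^ a = H' i * ∏ j, (h j) ^ (m i j))
    (v : ι → ℤ) (r : Fin s → ℤ)
    (R : Fin s → G₁) (hR : ∀ j, R j = (h j) ^ (r j))
    (B : Fin s → G₁)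
    (hB : ∀ j, B j = (h j) ^ ((∑ i ∈ I, m i j * v i) + r j))
    (c : G₁) (hc : c = ∏ i ∈ I, (T i) ^ (v i)) :
    e c (g₂ ^ a) * e (∏ j, R j) g₂ =
      e (∏ i ∈ I, (H' i) ^ (v i)) g₂ * e (∏ j, B j) g₂ := by
  have hB' : ∏ j, B j = (∏ j, h j ^ ∑ i ∈ I, m i j * v i) * ∏ j, R j := by
    simp_rw [hB, hR, zpow_add, prod_mul_distrib]
  have key : c ^ a * ∏ j, R j = (∏ i ∈ I, H' i ^ v i) * ∏ j, B j := by
    rw [hc, prod_zpow_zpow_of_zpow_eq a I univ h H' T m hT v, hB', mul_assoc]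
  calc e c (g₂ ^ a) * e (∏ j, R j) g₂
      = e (c ^ a * ∏ j, R j) g₂ := by
        rw [he₁, map_zpow_of_map_mul (e · g₂) (he₁ · · g₂),
          map_zpow_of_map_mul (e c) (he₂ c)]
    _ = e (∏ i ∈ I, H' i ^ v i) g₂ * e (∏ j, B j) g₂ := by rw [key, he₁]
end
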